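/- arXiv:1506.05341 — 4 statements merged into one kernel-verified Lean document; each statement's English description precedes it below -/
import Mathlib

section
/- For every real number α > 0, the integral ∫₀^∞ (e^{−t} − e^{−αt})/t dt converges and equals log α (Frullani's integral identity). -/
open MeasureTheory Real Set

private lemma frullani_key {a b : ℝ} :
    ∫ u in a..b, Real.exp (-u) = Real.exp (-a) - Real.exp (-b) := by
  rw [intervalIntegral.integral_comp_neg (fun u => Real.exp u), integral_exp]

private lemma frullani_bound {α : ℝ} (hα : 0 < α) {t : ℝ} (ht : 0 < t) :
    |(Real.exp (-t) - Real.exp (-(α * t))) / t| ≤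
      |α - 1| * Real.exp (-(min 1 α) * t) := by
  have hmin : min 1 α * t = min t (α * t) := by
    rcases le_total 1 α with h | h
    · rw [min_eq_left h, one_mul, min_eq_left (by nlinarith)]
    · rw [min_eq_right h, min_eq_right (by nlinarith)]
  have hb : ‖∫ u in t..(α * t), Real.exp (-u)‖ ≤
      Real.exp (-(min 1 α) * t) * |α * t - t| := by
    apply intervalIntegral.norm_integral_le_of_norm_le_const
    intro x hx
    rw [Real.norm_eq_abs, Real.abs_exp]
    apply Real.exp_le_exp.mpr
    rw [Set.uIoc] at hx
    have : min 1 α * t ≤ x := by rw [hmin]; exact le_of_lt hx.1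
    linarith
  rw [frullani_key, Real.norm_eq_abs] at hb
  have habs : |α * t - t| = |α - 1| * t := by
    rw [show α * t - t = (α - 1) * t by ring, abs_mul, abs_of_pos ht]
  rw [habs] at hb
  rw [abs_div, abs_of_pos ht, div_le_iff₀ ht]
  nlinarith [Real.exp_pos (-(min 1 α) * t), abs_nonneg (α - 1)]

private lemma frullani_cont {α : ℝ} :
    ContinuousOn (fun t : ℝ => (Real.exp (-t) - Real.exp (-(α * t))) / t) (Ioi 0) := by
  apply ContinuousOn.div
  · exact (((Real.continuous_exp.comp continuous_neg).sub
      (Real.continuous_exp.comp (continuous_const.mul continuous_id).neg))).continuousOn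
  · exact continuousOn_id
  · exact fun t ht => ne_of_gt ht

private lemma frullani_integrable {α : ℝ} (hα : 0 < α) :
    IntegrableOn (fun t : ℝ => (Real.exp (-t) - Real.exp (-(α * t))) / t)
      (Ioi 0) volume := by
  have hm : 0 < min 1 α := lt_min one_pos hα
  refine Integrable.mono' ((exp_neg_integrableOn_Ioi 0 hm).const_mul (|α - 1|)) ?_ ?_
  · exact frullani_cont.aestronglyMeasurable measurableSet_Ioi
  · filter_upwards [ae_restrict_mem measurableSet_Ioi] with t ht
    rw [Real.norm_eq_abs]
    calc |(Real.exp (-t) - Real.exp (-(α * t))) / t|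
        ≤ |α - 1| * Real.exp (-(min 1 α) * t) := frullani_bound hα ht
      _ = |α - 1| * Real.exp (-min 1 α * t) := by ring_nf

private lemma frullani_inner {α : ℝ} (hα : 1 ≤ α) {t : ℝ} (ht : 0 < t) :
    ∫ s in Ioc (1 : ℝ) α, Real.exp (-(t * s)) =
      (Real.exp (-t) - Real.exp (-(α * t))) / t := by
  rw [← intervalIntegral.integral_of_le hα,
    intervalIntegral.integral_comp_mul_left (fun u => Real.exp (-u)) (ne_of_gt ht),
    frullani_key]
  rw [mul_one, smul_eq_mul, mul_comm t α]
  field_simp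

private lemma frullani_value {α : ℝ} (hα : 1 ≤ α) :
    ∫ t in Ioi (0 : ℝ), (Real.exp (-t) - Real.exp (-(α * t))) / t = Real.log α := by
  have hα0 : (0 : ℝ) < α := lt_of_lt_of_le one_pos hα
  set μ := volume.restrict (Ioi (0 : ℝ))
  set ν := volume.restrict (Ioc (1 : ℝ) α)
  have hmeas : AEStronglyMeasurable (fun p : ℝ × ℝ => Real.exp (-(p.1 * p.2)))
      (μ.prod ν) := by
    exact (Real.continuous_exp.comp (continuous_fst.mul continuous_snd).neg).aestronglyMeasurable
  have hint : Integrable (fun p : ℝ × ℝ => Real.exp (-(p.1 * p.2))) (μ.prod ν) := by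
    rw [integrable_prod_iff hmeas]
    constructor
    · refine Filter.Eventually.of_forall fun t => ?_
      exact (Real.continuous_exp.comp (continuous_const.mul continuous_id).neg).integrableOn_Ioc
    · refine ((frullani_integrable hα0).congr ?_)
      filter_upwards [ae_restrict_mem measurableSet_Ioi] with t ht
      simp only [Real.norm_eq_abs, Real.abs_exp]
      exact (frullani_inner hα ht).symm
  calc ∫ t in Ioi (0 : ℝ), (Real.exp (-t) - Real.exp (-(α * t))) / t
      = ∫ t in Ioi (0 : ℝ), ∫ s in Ioc (1 : ℝ) α, Real.exp (-(t * s)) := by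
        refine setIntegral_congr_fun measurableSet_Ioi fun t ht => ?_
        exact (frullani_inner hα ht).symm
    _ = ∫ s in Ioc (1 : ℝ) α, ∫ t in Ioi (0 : ℝ), Real.exp (-(t * s)) :=
        integral_integral_swap hint
    _ = ∫ s in Ioc (1 : ℝ) α, s⁻¹ := by
        refine setIntegral_congr_fun measurableSet_Ioc fun s hs => ?_
        have hs0 : 0 < s := lt_trans one_pos hs.1
        rw [MeasureTheory.integral_comp_mul_right_Ioi (fun u => Real.exp (-u)) 0 hs0,
          zero_mul, integral_exp_neg_Ioi, neg_zero, Real.exp_zero, smul_eq_mul, mul_one]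
    _ = Real.log α := by
        rw [← intervalIntegral.integral_of_le hα, integral_inv
          (by rw [Set.uIcc_of_le hα]; intro h; exact absurd h.1 (by norm_num)),
          div_one]

/-- **Frullani's integral identity.** For every real `α > 0`, the function
`t ↦ (e^{-t} - e^{-α t})/t` is integrable on `(0, ∞)` and its integral equals `log α`. -/
theorem frullani_exp (α : ℝ) (hα : 0 < α) :
    IntegrableOn (fun t : ℝ => (Real.exp (-t) - Real.exp (-(α * t))) / t) (Ioi 0) volume ∧
    ∫ t in Ioi (0 : ℝ), (Real.exp (-t) - Real.exp (-(α * t))) / t = Real.log α := by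
  refine ⟨frullani_integrable hα, ?_⟩
  rcases le_or_gt 1 α with h | h
  · exact frullani_value h
  · have h1α : 1 ≤ α⁻¹ := by rw [le_inv_comm₀ one_pos hα]; simpa using h.le
    have key := frullani_value h1α
    have heq : ∀ t ∈ Ioi (0 : ℝ),
        (Real.exp (-t) - Real.exp (-(α * t))) / t =
        (-α) * ((Real.exp (-(α * t)) - Real.exp (-(α⁻¹ * (α * t)))) / (α * t)) := by
      intro t ht
      have hαne : α ≠ 0 := hα.ne'
      have htne : t ≠ 0 := (mem_Ioi.mp ht).ne'
      rw [inv_mul_cancel_left₀ hαne]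
      field_simp
      ring
    rw [setIntegral_congr_fun measurableSet_Ioi heq, integral_const_mul,
      MeasureTheory.integral_comp_mul_left_Ioi
        (fun u => (Real.exp (-u) - Real.exp (-(α⁻¹ * u))) / u) 0 hα,
      mul_zero, key, smul_eq_mul, Real.log_inv]
    field_simp
end

section
/- Let T be a nonnegative random variable with 0 < E[T] < ∞, and for each q > 0 let e_q be a random variable with the exponential distribution of rate q, independent of T. Then for every θ > 0, lim_{q↓0} E[e^{−θ e_q} · 1{T > e_q}] / P(T > e_q) = (1 − E[e^{−θT}]) / (θ · E[T]). In other words, the conditional law of e_q given {T > e_q} converges, as q ↓ 0, to the residual-life distribution associated with T. -/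
/-!
Write `Φ(s) = P(e_s < T) = 𝔼[1 - e^{-sT}]`. Conditioning on `T` (independence) gives the
denominator as `Φ(q)`, and since `e^{-θx}` times the `Exp(q)` density is `q/(q+θ)` times the
`Exp(q+θ)` density, the numerator is `q/(q+θ) · Φ(q+θ)`. The ratio is therefore
`(Φ(q+θ)/(q+θ)) / (Φ(q)/q)`. By dominated convergence `Φ` is continuous at `θ`, and
`Φ(q)/q → 𝔼[T]` because `0 ≤ (1 - e^{-qT})/q ≤ T`.
-/

open MeasureTheory ProbabilityTheory Real Set Filter Topology

lemma exponentialPDFReal_of_nonneg {r x : ℝ} (hx : 0 ≤ x) :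
    exponentialPDFReal r x = r * exp (-(r * x)) := by
  simp [exponentialPDFReal, gammaPDFReal, hx]

lemma exponentialPDFReal_mul_exp_neg {q θ : ℝ} (hqθ : q + θ ≠ 0) (x : ℝ) :
    exponentialPDFReal q x * exp (-(θ * x)) = q / (q + θ) * exponentialPDFReal (q + θ) x := by
  rcases le_or_gt 0 x with hx | hx
  · rw [exponentialPDFReal_of_nonneg hx, exponentialPDFReal_of_nonneg hx, mul_assoc,
      ← exp_add, show -(q * x) + -(θ * x) = -((q + θ) * x) by ring]
    field_simp
  · simp [exponentialPDFReal, gammaPDFReal, not_le.mpr hx]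

lemma setIntegral_Iio_exp_neg_expMeasure {q θ : ℝ} (hq : 0 < q) (hθ : 0 ≤ θ) (t : ℝ) :
    ∫ x in Iio t, exp (-(θ * x)) ∂expMeasure q = q / (q + θ) * cdf (expMeasure (q + θ)) t := by
  have hqθ : 0 < q + θ := by linarith
  rw [expMeasure, gammaMeasure,
    setIntegral_withDensity_eq_setIntegral_toReal_smul' (f := gammaPDF 1 q) _
      (measurable_gammaPDFReal 1 q).ennreal_ofReal (ae_of_all _ fun _ => ENNReal.ofReal_lt_top),
    cdf_expMeasure_eq_integral hqθ, ← integral_const_mul, setIntegral_congr_set Iio_ae_eq_Iic]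
  refine setIntegral_congr_fun measurableSet_Iic fun x _ => ?_
  rw [gammaPDF, ENNReal.toReal_ofReal (gammaPDFReal_nonneg one_pos hq x), smul_eq_mul]
  exact exponentialPDFReal_mul_exp_neg hqθ.ne' x

lemma ae_nonneg_expMeasure {r : ℝ} (hr : 0 < r) : ∀ᵐ x ∂expMeasure r, 0 ≤ x := by
  have := isProbabilityMeasure_expMeasure hr
  rw [ae_iff]
  refine measure_mono_null (t := Iic 0) (fun x hx => (not_le.mp hx).le) ?_
  rw [← ofReal_cdf, cdf_expMeasure_eq hr, if_pos le_rfl]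
  simp

lemma setIntegral_lt_eq_integral_setIntegral_Iio_of_indepFun {Ω E : Type*} [MeasurableSpace Ω]
    [NormedAddCommGroup E] [NormedSpace ℝ E] {P : Measure Ω} [IsProbabilityMeasure P]
    {X Y : Ω → ℝ} (hX : Measurable X) (hY : Measurable Y) (hXY : IndepFun X Y P)
    {g : ℝ → E} (hg : Integrable g (P.map Y)) :
    ∫ ω in {ω | Y ω < X ω}, g (Y ω) ∂P = ∫ ω, ∫ y in Iio (X ω), g y ∂P.map Y ∂P := by
  have hlt : MeasurableSet {p : ℝ × ℝ | p.2 < p.1} :=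
    measurableSet_lt measurable_snd measurable_fst
  set F : ℝ × ℝ → E := {p | p.2 < p.1}.indicator (g ∘ Prod.snd)
  have hF : Integrable F ((P.map X).prod (P.map Y)) := (hg.comp_snd _).indicator hlt
  have hFmap : Integrable F (P.map fun ω => (X ω, Y ω)) := by
    rwa [hXY.map_prod_eq_prod_map_map hX.aemeasurable hY.aemeasurable]
  calc ∫ ω in {ω | Y ω < X ω}, g (Y ω) ∂P
      = ∫ ω, F (X ω, Y ω) ∂P := by
        rw [← integral_indicator (measurableSet_lt hY hX)]
        rfl
    _ = ∫ x, ∫ y, F (x, y) ∂P.map Y ∂P.map X := by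
        rw [← integral_map (hX.prodMk hY).aemeasurable hFmap.aestronglyMeasurable,
          hXY.map_prod_eq_prod_map_map hX.aemeasurable hY.aemeasurable, integral_prod _ hF]
    _ = ∫ ω, ∫ y in Iio (X ω), g y ∂P.map Y ∂P := by
        rw [integral_map hX.aemeasurable hF.integral_prod_left.aestronglyMeasurable]
        simp_rw [← integral_indicator measurableSet_Iio]
        rfl

lemma cdf_expMeasure_of_nonneg {r t : ℝ} (hr : 0 < r) (ht : 0 ≤ t) :
    cdf (expMeasure r) t = 1 - exp (-(r * t)) := by
  rw [cdf_expMeasure_eq hr, if_pos ht]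

lemma cdf_expMeasure_div_le {s t : ℝ} (hs : 0 < s) (ht : 0 ≤ t) :
    cdf (expMeasure s) t / s ≤ t := by
  rw [cdf_expMeasure_of_nonneg hs ht, div_le_iff₀ hs]
  linarith [one_sub_le_exp_neg (s * t)]

lemma tendsto_cdf_expMeasure_div {t : ℝ} (ht : 0 ≤ t) :
    Tendsto (fun s => cdf (expMeasure s) t / s) (𝓝[>] 0) (𝓝 t) := by
  have hderiv : HasDerivAt (fun s => 1 - exp (-(s * t))) t 0 := by
    simpa using ((hasDerivAt_mul_const (x := (0 : ℝ)) t).neg.exp.const_sub 1)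
  refine ((hasDerivAt_iff_tendsto_slope.mp hderiv).mono_left
    (nhdsWithin_mono 0 fun s hs => ne_of_gt hs)).congr' ?_
  filter_upwards [self_mem_nhdsWithin] with s (hs : 0 < s)
  simp [slope_def_field, cdf_expMeasure_of_nonneg hs ht]

lemma continuousAt_cdf_expMeasure {θ : ℝ} (hθ : 0 < θ) (t : ℝ) :
    ContinuousAt (fun s => cdf (expMeasure s) t) θ := by
  have hcont : Continuous fun s => if 0 ≤ t then 1 - exp (-(s * t)) else 0 := by
    split_ifs <;> fun_prop
  refine hcont.continuousAt.congr ?_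
  filter_upwards [lt_mem_nhds hθ] with s hs
  rw [cdf_expMeasure_eq hs]

section

variable {Ω : Type*} [MeasurableSpace Ω] {P : Measure Ω} {X : Ω → ℝ}

lemma integrable_exp_neg_mul [IsFiniteMeasure P] (hX : AEMeasurable X P)
    (hX0 : ∀ᵐ ω ∂P, 0 ≤ X ω) {r : ℝ} (hr : 0 ≤ r) : Integrable (fun ω => exp (-(r * X ω))) P := by
  refine Integrable.mono' (integrable_const 1) (by fun_prop) ?_
  filter_upwards [hX0] with ω hω
  rw [norm_of_nonneg (exp_nonneg _), exp_le_one_iff, neg_nonpos]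
  positivity

lemma tendsto_integral_cdf_expMeasure [IsFiniteMeasure P] (hX : AEMeasurable X P) {θ : ℝ}
    (hθ : 0 < θ) :
    Tendsto (fun s => ∫ ω, cdf (expMeasure s) (X ω) ∂P) (𝓝 θ)
      (𝓝 (∫ ω, cdf (expMeasure θ) (X ω) ∂P)) := by
  refine tendsto_integral_filter_of_dominated_convergence (fun _ => 1)
    (Eventually.of_forall fun s =>
      ((cdf _).mono.measurable.comp_aemeasurable hX).aestronglyMeasurable)
    (Eventually.of_forall fun s => ae_of_all _ fun ω => ?_) (integrable_const 1)
    (ae_of_all _ fun ω => (continuousAt_cdf_expMeasure hθ (X ω)).tendsto)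
  rw [norm_of_nonneg (cdf_nonneg _ _)]
  exact cdf_le_one _ _

lemma tendsto_integral_cdf_expMeasure_div (hX : Integrable X P) (hX0 : ∀ᵐ ω ∂P, 0 ≤ X ω) :
    Tendsto (fun s => (∫ ω, cdf (expMeasure s) (X ω) ∂P) / s) (𝓝[>] 0)
      (𝓝 (∫ ω, X ω ∂P)) := by
  have hmeas (s : ℝ) : AEMeasurable (fun ω => cdf (expMeasure s) (X ω) / s) P :=
    ((cdf _).mono.measurable.comp_aemeasurable hX.aemeasurable).div_const s
  simp_rw [← integral_div]
  refine tendsto_integral_filter_of_dominated_convergence X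
    (Eventually.of_forall fun s => (hmeas s).aestronglyMeasurable)
    ?_ hX (hX0.mono fun ω => tendsto_cdf_expMeasure_div)
  filter_upwards [self_mem_nhdsWithin] with s (hs : 0 < s)
  filter_upwards [hX0] with ω hω
  rw [norm_of_nonneg (div_nonneg (cdf_nonneg _ _) hs.le)]
  exact cdf_expMeasure_div_le hs hω

lemma integral_cdf_expMeasure [IsProbabilityMeasure P] (hX : AEMeasurable X P)
    (hX0 : ∀ᵐ ω ∂P, 0 ≤ X ω) {r : ℝ} (hr : 0 < r) :
    ∫ ω, cdf (expMeasure r) (X ω) ∂P = 1 - ∫ ω, exp (-(r * X ω)) ∂P :=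
  calc ∫ ω, cdf (expMeasure r) (X ω) ∂P = ∫ ω, (1 - exp (-(r * X ω))) ∂P :=
        integral_congr_ae (hX0.mono fun ω hω => cdf_expMeasure_of_nonneg hr hω)
    _ = 1 - ∫ ω, exp (-(r * X ω)) ∂P := by
        rw [integral_sub (integrable_const 1) (integrable_exp_neg_mul hX hX0 hr.le),
          integral_const, probReal_univ, one_smul]

lemma tendsto_mul_integral_cdf_expMeasure_div [IsProbabilityMeasure P] (hX : Integrable X P)
    (hX0 : ∀ᵐ ω ∂P, 0 ≤ X ω) (hXpos : 0 < ∫ ω, X ω ∂P) {θ : ℝ} (hθ : 0 < θ) :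
    Tendsto (fun q => q / (q + θ) * (∫ ω, cdf (expMeasure (q + θ)) (X ω) ∂P) /
        ∫ ω, cdf (expMeasure q) (X ω) ∂P) (𝓝[>] 0)
      (𝓝 ((1 - ∫ ω, exp (-(θ * X ω)) ∂P) / (θ * ∫ ω, X ω ∂P))) := by
  have hshift : Tendsto (fun q => q + θ) (𝓝[>] 0) (𝓝 θ) := by
    simpa using ((continuous_add_const θ).tendsto 0).mono_left nhdsWithin_le_nhds
  have hnum :=
    ((tendsto_integral_cdf_expMeasure hX.aemeasurable hθ).comp hshift).div hshift hθ.ne'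
  rw [← div_div, ← integral_cdf_expMeasure hX.aemeasurable hX0 hθ]
  refine (hnum.div (tendsto_integral_cdf_expMeasure_div hX hX0) hXpos.ne').congr fun q => ?_
  simp only [Pi.div_apply, Function.comp_apply]
  rw [div_div_eq_mul_div]
  ring

end

section

variable {Ω : Type*} [MeasurableSpace Ω] {P : Measure Ω} [IsProbabilityMeasure P]
  {T E : Ω → ℝ} {q : ℝ}

lemma setIntegral_lt_exp_neg_of_indepFun (hT : Measurable T) (hE : Measurable E)
    (hTE : IndepFun T E P) (hq : 0 < q) (hlaw : P.map E = expMeasure q) {θ : ℝ} (hθ : 0 ≤ θ) :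
    ∫ ω in {ω | E ω < T ω}, exp (-(θ * E ω)) ∂P =
      q / (q + θ) * ∫ ω, cdf (expMeasure (q + θ)) (T ω) ∂P := by
  have := isProbabilityMeasure_expMeasure hq
  have hint : Integrable (fun x => exp (-(θ * x))) (P.map E) := by
    rw [hlaw]
    exact integrable_exp_neg_mul aemeasurable_id (ae_nonneg_expMeasure hq) hθ
  rw [setIntegral_lt_eq_integral_setIntegral_Iio_of_indepFun hT hE hTE hint, hlaw,
    ← integral_const_mul]
  simp_rw [setIntegral_Iio_exp_neg_expMeasure hq hθ]

lemma toReal_measure_lt_of_indepFun (hT : Measurable T) (hE : Measurable E)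
    (hTE : IndepFun T E P) (hq : 0 < q) (hlaw : P.map E = expMeasure q) :
    (P {ω | E ω < T ω}).toReal = ∫ ω, cdf (expMeasure q) (T ω) ∂P := by
  simpa [hq.ne', measureReal_def] using
    setIntegral_lt_exp_neg_of_indepFun hT hE hTE hq hlaw le_rfl

end

/-- Let `T ≥ 0` with `0 < 𝔼[T] < ∞`, and for each `q > 0` let `E q` be an exponential random
variable of rate `q` independent of `T`. Then for every `θ > 0`,
`𝔼[e^{-θ E_q} ; T > E_q] / P(T > E_q) → (1 - 𝔼[e^{-θ T}]) / (θ 𝔼[T])` as `q ↓ 0`: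
the conditional law of `E_q` given `{T > E_q}` converges to the residual-life
distribution of `T`. -/
theorem cond_exponential_tendsto_residual_life
    {Ω : Type*} [MeasureSpace Ω] [IsProbabilityMeasure (ℙ : Measure Ω)]
    (T : Ω → ℝ) (hT : Measurable T) (hT0 : ∀ᵐ ω ∂ℙ, 0 ≤ T ω)
    (hTint : Integrable T ℙ) (hTpos : 0 < ∫ ω, T ω ∂ℙ)
    (E : ℝ → Ω → ℝ) (hE : ∀ q, 0 < q → Measurable (E q))
    (hindep : ∀ q, 0 < q → IndepFun T (E q) ℙ)
    (hEq : ∀ q, 0 < q → Measure.map (E q) ℙ = expMeasure q)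
    (θ : ℝ) (hθ : 0 < θ) :
    Tendsto
      (fun q : ℝ =>
        (∫ ω in {ω | E q ω < T ω}, Real.exp (-(θ * E q ω)) ∂ℙ) /
          (ℙ {ω | E q ω < T ω}).toReal)
      (nhdsWithin 0 (Ioi 0))
      (nhds ((1 - ∫ ω, Real.exp (-(θ * T ω)) ∂ℙ) / (θ * ∫ ω, T ω ∂ℙ))) := by
  refine (tendsto_mul_integral_cdf_expMeasure_div hTint hT0 hTpos hθ).congr' ?_
  filter_upwards [self_mem_nhdsWithin] with q (hq : 0 < q)
  rw [setIntegral_lt_exp_neg_of_indepFun hT (hE q hq) (hindep q hq) hq (hEq q hq) hθ.le,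
    toReal_measure_lt_of_indepFun hT (hE q hq) (hindep q hq) hq (hEq q hq)]
end

section
/- Let λ > 0, let Q₀ be a random variable with the exponential distribution of rate λ, and let I be a random variable with I ≤ 0 almost surely, independent of Q₀. Then for every θ ≥ 0, E[e^{−θ·max(Q₀ + I, 0)}] = 1 − (θ/(λ+θ)) · E[e^{λ I}]. -/
/-!
Conditioning on `I = y` (independence and Fubini) reduces the claim to the Laplace transform of
`max (Q₀ + y) 0` for a fixed `y ≤ 0`. There `Q₀ ≤ -y` has probability `1 - e^{λy}` and the
integrand is `1`, while on `Q₀ > -y` the density `λ e^{-λx}` against `e^{-θ(x + y)}` integrates to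
`λ/(λ+θ) · e^{λy}` (memorylessness). The resulting affine function of `e^{λy}` is then
integrated against the law of `I`.
-/

open MeasureTheory ProbabilityTheory Real Set

lemma setIntegral_expMeasure_of_subset_Ici {r : ℝ} (hr : 0 ≤ r) {s : Set ℝ}
    (hs : MeasurableSet s) (hs0 : s ⊆ Ici 0) (f : ℝ → ℝ) :
    ∫ x in s, f x ∂expMeasure r = ∫ x in s, r * exp (-(r * x)) * f x := by
  have hpdf : Measurable (exponentialPDF r) := (measurable_exponentialPDFReal r).ennreal_ofReal
  rw [show expMeasure r = volume.withDensity (exponentialPDF r) from rfl,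
    setIntegral_withDensity_eq_setIntegral_toReal_smul hpdf
      (.of_forall fun _ ↦ ENNReal.ofReal_lt_top) f hs]
  refine setIntegral_congr_fun hs fun x hx ↦ ?_
  rw [exponentialPDF_of_nonneg (hs0 hx), ENNReal.toReal_ofReal (by positivity), smul_eq_mul]

lemma norm_exp_neg_mul_max_le_one {θ : ℝ} (hθ : 0 ≤ θ) (a : ℝ) :
    ‖exp (-(θ * max a 0))‖ ≤ 1 := by
  rw [norm_of_nonneg (exp_nonneg _), exp_le_one_iff, neg_nonpos]
  exact mul_nonneg hθ (le_max_right _ _)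

lemma integral_exp_neg_mul_max_add_expMeasure {r θ y : ℝ} (hr : 0 < r) (hθ : 0 ≤ θ)
    (hy : y ≤ 0) :
    ∫ x, exp (-(θ * max (x + y) 0)) ∂expMeasure r = 1 - θ / (r + θ) * exp (r * y) := by
  have : IsProbabilityMeasure (expMeasure r) := isProbabilityMeasure_expMeasure hr
  have hint : Integrable (fun x ↦ exp (-(θ * max (x + y) 0))) (expMeasure r) :=
    .of_bound (by fun_prop) 1 (.of_forall fun _ ↦ norm_exp_neg_mul_max_le_one hθ _)
  have hbelow : ∫ x in Iic (-y), exp (-(θ * max (x + y) 0)) ∂expMeasure r = 1 - exp (r * y) := by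
    rw [setIntegral_congr_fun measurableSet_Iic fun x (hx : x ≤ -y) ↦ by
        rw [max_eq_right (by linarith), mul_zero, neg_zero, exp_zero],
      setIntegral_const, smul_eq_mul, mul_one, ← cdf_eq_real, cdf_expMeasure_eq hr,
      if_pos (by linarith), mul_neg, neg_neg]
  have habove : ∫ x in Ioi (-y), exp (-(θ * max (x + y) 0)) ∂expMeasure r
      = r / (r + θ) * exp (r * y) := by
    have hrθ : 0 < r + θ := by linarith
    rw [setIntegral_expMeasure_of_subset_Ici hr.le measurableSet_Ioi
        (Ioi_subset_Ici_iff.mpr (by linarith)),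
      setIntegral_congr_fun measurableSet_Ioi fun x (hx : -y < x) ↦ by
        rw [max_eq_left (by linarith), mul_assoc, ← exp_add,
          show -(r * x) + -(θ * (x + y)) = -(θ * y) + -(r + θ) * x by ring, exp_add, ← mul_assoc],
      integral_const_mul, integral_exp_mul_Ioi (by linarith), neg_div_neg_eq, mul_div_assoc',
      mul_assoc r, ← exp_add, show -(θ * y) + -(r + θ) * -y = r * y by ring]
    ring
  rw [← integral_add_compl measurableSet_Ioi hint, compl_Ioi, hbelow, habove]
  field_simp
  ring

theorem ProbabilityTheory.IndepFun.integral_comp_eq_integral_integral {Ω α β : Type*}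
    [MeasurableSpace Ω] [MeasurableSpace α] [MeasurableSpace β] {μ : Measure Ω} [IsFiniteMeasure μ]
    {X : Ω → α} {Y : Ω → β} (hXY : IndepFun X Y μ) (hX : AEMeasurable X μ)
    (hY : AEMeasurable Y μ) {f : α × β → ℝ} (hf : Integrable f ((μ.map X).prod (μ.map Y))) :
    ∫ ω, f (X ω, Y ω) ∂μ = ∫ y, ∫ x, f (x, y) ∂μ.map X ∂μ.map Y := by
  have hlaw := (indepFun_iff_map_prod_eq_prod_map_map hX hY).mp hXY
  rw [← integral_prod_symm f hf, ← hlaw, integral_map (hX.prodMk hY) (hlaw ▸ hf.1)]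

/-- If `Q₀` is exponential of rate `λ > 0` and `I ≤ 0` a.s. is independent of `Q₀`, then for every
`θ ≥ 0`, `𝔼[e^{-θ max(Q₀ + I, 0)}] = 1 - (θ/(λ+θ)) 𝔼[e^{λ I}]`. -/
theorem min_workload_exponential_initial
    {Ω : Type*} [MeasureSpace Ω] [IsProbabilityMeasure (ℙ : Measure Ω)]
    (lam : ℝ) (hlam : 0 < lam)
    (Q₀ I : Ω → ℝ) (hQ₀ : Measurable Q₀) (hI : Measurable I)
    (hQ₀law : Measure.map Q₀ ℙ = expMeasure lam)
    (hI0 : ∀ᵐ ω ∂ℙ, I ω ≤ 0)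
    (hindep : IndepFun Q₀ I ℙ)
    (θ : ℝ) (hθ : 0 ≤ θ) :
    ∫ ω, Real.exp (-(θ * max (Q₀ ω + I ω) 0)) ∂ℙ
      = 1 - θ / (lam + θ) * ∫ ω, Real.exp (lam * I ω) ∂ℙ := by
  have : IsProbabilityMeasure (expMeasure lam) := isProbabilityMeasure_expMeasure hlam
  have : IsProbabilityMeasure (Measure.map I ℙ) := Measure.isProbabilityMeasure_map hI.aemeasurable
  have hint : Integrable (fun p : ℝ × ℝ ↦ exp (-(θ * max (p.1 + p.2) 0)))
      ((expMeasure lam).prod (Measure.map I ℙ)) :=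
    .of_bound (by fun_prop) 1 (.of_forall fun _ ↦ norm_exp_neg_mul_max_le_one hθ _)
  have hexp : Integrable (fun ω ↦ exp (lam * I ω)) ℙ :=
    .of_bound (by fun_prop) 1 (hI0.mono fun ω hω ↦ by
      rw [norm_of_nonneg (exp_nonneg _), exp_le_one_iff]
      exact mul_nonpos_of_nonneg_of_nonpos hlam.le hω)
  calc ∫ ω, exp (-(θ * max (Q₀ ω + I ω) 0))
      = ∫ y, ∫ x, exp (-(θ * max (x + y) 0)) ∂expMeasure lam ∂Measure.map I ℙ := by
        rw [← hQ₀law] at hint ⊢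
        exact hindep.integral_comp_eq_integral_integral hQ₀.aemeasurable hI.aemeasurable hint
    _ = ∫ y, (1 - θ / (lam + θ) * exp (lam * y)) ∂Measure.map I ℙ :=
        integral_congr_ae (((ae_map_iff hI.aemeasurable measurableSet_Iic).mpr hI0).mono
          fun _ hy ↦ integral_exp_neg_mul_max_add_expMeasure hlam hθ hy)
    _ = ∫ ω, (1 - θ / (lam + θ) * exp (lam * I ω)) := integral_map hI.aemeasurable (by fun_prop)
    _ = 1 - θ / (lam + θ) * ∫ ω, exp (lam * I ω) := by
        rw [integral_sub (integrable_const 1) (hexp.const_mul _), integral_const_mul]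
        simp
end

section
/- Let (μ_t)_{t>0} be a family of Borel probability measures on ℝ such that t ↦ μ_t(A) is measurable for every Borel set A, and let θ ≥ 0. Suppose that for some q₀ > 0 the function (t,x) ↦ |e^{−t} − e^{−q₀ t − θx}|/t is integrable over (0,∞) × (0,∞) with respect to dt μ_t(dx). Define G(q) = ∫₀^∞ ∫_{(0,∞)} (e^{−t} − e^{−q t − θx})/t μ_t(dx) dt. Then G(q) is finite for every q > 0, G is differentiable on (0,∞), and for every q > 0 one has q·G′(q) = ∫₀^∞ ∫_{(0,∞)} q e^{−q t − θx} μ_t(dx) dt. -/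
open MeasureTheory Real Set ProbabilityTheory Filter
open scoped ENNReal Topology

/-!
Disintegrate `dt μ_t(dx)` on `(0,∞)²` as one measure `ν`, the composition-product of Lebesgue
measure with the kernel `t ↦ μ_t`. Writing `F_q(t,x) = (e^{-t} - e^{-qt-θx})/t`, the mean value
bound `|F_q - F_{q₀}| ≤ |q - q₀| e^{-min(q,q₀) t}` and `μ_t(ℝ) ≤ 1` make every `F_q` with `q > 0`
`ν`-integrable. Near `q` the derivative `∂_q F_q = e^{-qt-θx}` is dominated by `e^{-qt/2}`, so one
may differentiate `G(q) = ∫ F_q dν` under the integral sign.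
-/

theorem abs_exp_neg_sub_exp_neg_le (a b : ℝ) :
    |exp (-a) - exp (-b)| ≤ |a - b| * exp (-min a b) := by
  wlog hab : a ≤ b generalizing a b
  · rw [abs_sub_comm, abs_sub_comm a, min_comm]
    exact this b a (le_of_not_ge hab)
  rw [min_eq_left hab, abs_of_nonneg (sub_nonneg.2 (exp_le_exp.2 (neg_le_neg hab))),
    abs_of_nonpos (sub_nonpos.2 hab)]
  have hsplit : exp (-b) = exp (a - b) * exp (-a) := by rw [← exp_add]; ring_nf
  nlinarith [add_one_le_exp (a - b), exp_pos (-a)]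

namespace ProbabilityTheory

variable {α β : Type*} [MeasurableSpace α] [MeasurableSpace β] {μ : α → Measure β} {s : Set α}
  (hμ : ∀ A, MeasurableSet A → Measurable fun a => μ a A) (hs : MeasurableSet s)

open scoped Classical in
/-- Off `s` the family need not be finite, or even s-finite, so it is replaced there by `0`. -/
noncomputable def familyKernelOn : Kernel α β :=
  Kernel.piecewise hs ⟨μ, Measure.measurable_of_measurable_coe μ hμ⟩ 0

theorem familyKernelOn_apply_of_mem {a : α} (ha : a ∈ s) : familyKernelOn hμ hs a = μ a := by
  simp [familyKernelOn, Kernel.piecewise_apply, ha]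

theorem isFiniteKernel_familyKernelOn (hprob : ∀ a ∈ s, IsProbabilityMeasure (μ a)) :
    IsFiniteKernel (familyKernelOn hμ hs) := by
  refine ⟨⟨1, ENNReal.one_lt_top, fun a => ?_⟩⟩
  by_cases ha : a ∈ s
  · have := hprob a ha
    rw [familyKernelOn_apply_of_mem hμ hs ha]
    exact prob_le_one
  · simp [familyKernelOn, Kernel.piecewise_apply, ha]

variable (ρ : Measure α) [SFinite ρ] {t : Set β}

theorem setLIntegral_compProd_familyKernelOn [IsSFiniteKernel (familyKernelOn hμ hs)]
    (ht : MeasurableSet t) {f : α × β → ℝ≥0∞} (hf : Measurable f) :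
    ∫⁻ p in s ×ˢ t, f p ∂(ρ ⊗ₘ familyKernelOn hμ hs) = ∫⁻ a in s, ∫⁻ b in t, f (a, b) ∂μ a ∂ρ := by
  rw [Measure.setLIntegral_compProd hf hs ht]
  exact setLIntegral_congr_fun hs fun a ha => by rw [familyKernelOn_apply_of_mem hμ hs ha]

theorem setIntegral_compProd_familyKernelOn [IsSFiniteKernel (familyKernelOn hμ hs)]
    (ht : MeasurableSet t) {E : Type*} [NormedAddCommGroup E] [NormedSpace ℝ E] {f : α × β → E}
    (hf : IntegrableOn f (s ×ˢ t) (ρ ⊗ₘ familyKernelOn hμ hs)) :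
    ∫ p in s ×ˢ t, f p ∂(ρ ⊗ₘ familyKernelOn hμ hs) = ∫ a in s, ∫ b in t, f (a, b) ∂μ a ∂ρ := by
  rw [Measure.setIntegral_compProd hs ht hf]
  exact setIntegral_congr_fun hs fun a ha => by rw [familyKernelOn_apply_of_mem hμ hs ha]

theorem integrableOn_comp_fst_compProd_familyKernelOn
    (hprob : ∀ a ∈ s, IsProbabilityMeasure (μ a)) (ht : MeasurableSet t) {E : Type*}
    [NormedAddCommGroup E] {g : α → E} (hgm : StronglyMeasurable g) (hg : IntegrableOn g s ρ) :
    IntegrableOn (fun p => g p.1) (s ×ˢ t) (ρ ⊗ₘ familyKernelOn hμ hs) := by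
  have := isFiniteKernel_familyKernelOn hμ hs hprob
  refine ⟨(hgm.comp_measurable measurable_fst).aestronglyMeasurable, ?_⟩
  rw [HasFiniteIntegral, setLIntegral_compProd_familyKernelOn hμ hs ρ ht
    (f := fun p => ‖g p.1‖ₑ) (hgm.comp_measurable measurable_fst).enorm]
  calc ∫⁻ a in s, ∫⁻ _ in t, ‖g a‖ₑ ∂μ a ∂ρ ≤ ∫⁻ a in s, ‖g a‖ₑ ∂ρ := by
        refine setLIntegral_mono' hs fun a ha => ?_
        have := hprob a ha
        rw [lintegral_const, Measure.restrict_apply_univ]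
        exact mul_le_of_le_one_right' prob_le_one
    _ < ⊤ := hg.2

end ProbabilityTheory

noncomputable def ladderIntegrand (θ q : ℝ) (p : ℝ × ℝ) : ℝ :=
  (exp (-p.1) - exp (-(q * p.1 + θ * p.2))) / p.1

section LadderIntegrand

variable {θ q : ℝ} {p : ℝ × ℝ}

@[fun_prop]
theorem measurable_ladderIntegrand (θ q : ℝ) : Measurable (ladderIntegrand θ q) := by
  unfold ladderIntegrand
  fun_prop

theorem enorm_ladderIntegrand (hp : 0 < p.1) :
    ‖ladderIntegrand θ q p‖ₑ
      = ENNReal.ofReal (|exp (-p.1) - exp (-(q * p.1 + θ * p.2))| / p.1) := by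
  rw [ladderIntegrand, Real.enorm_eq_ofReal_abs, abs_div, abs_of_pos hp]

theorem hasDerivAt_ladderIntegrand (hp : p.1 ≠ 0) :
    HasDerivAt (fun r => ladderIntegrand θ r p) (exp (-(q * p.1 + θ * p.2))) q := by
  have hderiv := ((((hasDerivAt_mul_const (x := q) p.1).add_const (θ * p.2)).neg.exp).const_sub
    (exp (-p.1))).div_const p.1
  refine hderiv.congr_deriv ?_
  simp only [Pi.neg_apply]
  field_simp

theorem exp_neg_add_le_exp_neg_mul (hθ : 0 ≤ θ) (hp : 0 ≤ p.1 ∧ 0 ≤ p.2) {m r : ℝ} (hmr : m ≤ r) :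
    exp (-(r * p.1 + θ * p.2)) ≤ exp (-m * p.1) :=
  exp_le_exp.2 (by nlinarith [mul_nonneg hθ hp.2])

theorem abs_ladderIntegrand_sub_le (hθ : 0 ≤ θ) (hp : 0 < p.1 ∧ 0 ≤ p.2) (q₀ : ℝ) :
    |ladderIntegrand θ q p - ladderIntegrand θ q₀ p| ≤ |q - q₀| * exp (-min q q₀ * p.1) := by
  have hdiff : ladderIntegrand θ q p - ladderIntegrand θ q₀ p
      = (exp (-(q₀ * p.1 + θ * p.2)) - exp (-(q * p.1 + θ * p.2))) / p.1 := by
    unfold ladderIntegrand; ring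
  have hmin : min q q₀ * p.1 ≤ min (q₀ * p.1 + θ * p.2) (q * p.1 + θ * p.2) := by
    apply le_min <;> nlinarith [min_le_left q q₀, min_le_right q q₀, mul_nonneg hθ hp.2]
  rw [hdiff, abs_div, abs_of_pos hp.1, div_le_iff₀ hp.1]
  calc _ ≤ |q₀ * p.1 + θ * p.2 - (q * p.1 + θ * p.2)|
        * exp (-min (q₀ * p.1 + θ * p.2) (q * p.1 + θ * p.2)) := abs_exp_neg_sub_exp_neg_le _ _
    _ ≤ |q - q₀| * p.1 * exp (-min q q₀ * p.1) := by
        rw [show q₀ * p.1 + θ * p.2 - (q * p.1 + θ * p.2) = (q₀ - q) * p.1 by ring, abs_mul,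
          abs_of_pos hp.1, abs_sub_comm, neg_mul]
        gcongr
        exact mul_nonneg (abs_nonneg _) hp.1.le
    _ = _ := by ring

end LadderIntegrand

section Differentiation

variable {ν : Measure (ℝ × ℝ)} {θ q q₀ : ℝ} (hθ : 0 ≤ θ) (hsupp : ∀ᵐ p ∂ν, 0 < p.1 ∧ 0 ≤ p.2)
  (hexp : ∀ m, 0 < m → Integrable (fun p => exp (-m * p.1)) ν)
include hθ hsupp hexp

theorem integrable_exp_neg_add (hq : 0 < q) :
    Integrable (fun p => exp (-(q * p.1 + θ * p.2))) ν :=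
  (hexp q hq).mono' (by fun_prop) (hsupp.mono fun p hp => by
    rw [norm_of_nonneg (exp_pos _).le]
    exact exp_neg_add_le_exp_neg_mul hθ ⟨hp.1.le, hp.2⟩ le_rfl)

theorem integrable_ladderIntegrand (hq₀ : 0 < q₀) (h₀ : Integrable (ladderIntegrand θ q₀) ν)
    (hq : 0 < q) : Integrable (ladderIntegrand θ q) ν := by
  have hdiff : Integrable (ladderIntegrand θ q - ladderIntegrand θ q₀) ν :=
    ((hexp _ (lt_min hq hq₀)).const_mul |q - q₀|).mono' (by fun_prop)
      (hsupp.mono fun p hp => abs_ladderIntegrand_sub_le hθ hp q₀)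
  simpa only [add_sub_cancel] using h₀.add hdiff

theorem hasDerivAt_integral_ladderIntegrand (hq₀ : 0 < q₀)
    (h₀ : Integrable (ladderIntegrand θ q₀) ν) (hq : 0 < q) :
    HasDerivAt (fun r => ∫ p, ladderIntegrand θ r p ∂ν)
      (∫ p, exp (-(q * p.1 + θ * p.2)) ∂ν) q := by
  have hball : Metric.ball q (q / 2) ∈ 𝓝 q := Metric.ball_mem_nhds q (by positivity)
  refine (hasDerivAt_integral_of_dominated_loc_of_deriv_le hball
    (F' := fun r p => exp (-(r * p.1 + θ * p.2)))
    (Eventually.of_forall fun r => (measurable_ladderIntegrand θ r).aestronglyMeasurable)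
    (integrable_ladderIntegrand hθ hsupp hexp hq₀ h₀ hq) (by fun_prop)
    (bound := fun p => exp (-(q / 2) * p.1)) ?_ (hexp _ (by positivity)) ?_).2
  · filter_upwards [hsupp] with p hp r hr
    rw [Metric.mem_ball, Real.dist_eq, abs_sub_lt_iff] at hr
    rw [norm_of_nonneg (exp_pos _).le]
    exact exp_neg_add_le_exp_neg_mul hθ ⟨hp.1.le, hp.2⟩ (by linarith)
  · filter_upwards [hsupp] with p hp r _
    exact hasDerivAt_ladderIntegrand hp.1.ne'

end Differentiation

/-- Let `(μ_t)_{t>0}` be a measurable family of Borel probability measures on `ℝ`, `θ ≥ 0`, and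
suppose the integrand defining `G(q₀) = log κ̄(q₀,θ)` is absolutely integrable for some `q₀ > 0`.
Then `G(q) = ∫₀^∞ ∫_{(0,∞)} (e^{-t} - e^{-qt-θx})/t μ_t(dx) dt` is (absolutely) finite for
every `q > 0`, `G` is differentiable on `(0,∞)`, and
`q G'(q) = ∫₀^∞ ∫_{(0,∞)} q e^{-qt-θx} μ_t(dx) dt` for every `q > 0`. -/
theorem ladder_exponent_log_deriv
    (μ : ℝ → Measure ℝ)
    (hprob : ∀ t, 0 < t → IsProbabilityMeasure (μ t))
    (hmeas : ∀ A : Set ℝ, MeasurableSet A → Measurable fun t => μ t A)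
    (θ : ℝ) (hθ : 0 ≤ θ)
    (q₀ : ℝ) (hq₀ : 0 < q₀)
    (hint : ∫⁻ t in Ioi (0 : ℝ), ∫⁻ x in Ioi (0 : ℝ),
        ENNReal.ofReal (|Real.exp (-t) - Real.exp (-(q₀ * t + θ * x))| / t) ∂(μ t) < ⊤)
    (G : ℝ → ℝ)
    (hG : ∀ q : ℝ, G q = ∫ t in Ioi (0 : ℝ), ∫ x in Ioi (0 : ℝ),
        (Real.exp (-t) - Real.exp (-(q * t + θ * x))) / t ∂(μ t)) :
    (∀ q : ℝ, 0 < q → ∫⁻ t in Ioi (0 : ℝ), ∫⁻ x in Ioi (0 : ℝ),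
        ENNReal.ofReal (|Real.exp (-t) - Real.exp (-(q * t + θ * x))| / t) ∂(μ t) < ⊤) ∧
    (∀ q : ℝ, 0 < q → DifferentiableAt ℝ G q) ∧
    (∀ q : ℝ, 0 < q → q * deriv G q
      = ∫ t in Ioi (0 : ℝ), ∫ x in Ioi (0 : ℝ), q * Real.exp (-(q * t + θ * x)) ∂(μ t)) := by
  have hS : MeasurableSet (Ioi (0 : ℝ) ×ˢ Ioi (0 : ℝ)) :=
    measurableSet_Ioi.prod measurableSet_Ioi
  have := isFiniteKernel_familyKernelOn hmeas measurableSet_Ioi hprob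
  set ν := (volume ⊗ₘ familyKernelOn hmeas measurableSet_Ioi).restrict
    (Ioi (0 : ℝ) ×ˢ Ioi (0 : ℝ))
  have hsupp : ∀ᵐ p ∂ν, 0 < p.1 ∧ 0 ≤ p.2 :=
    ae_restrict_of_forall_mem hS fun p hp => ⟨hp.1, le_of_lt hp.2⟩
  have hexp (m : ℝ) (hm : 0 < m) : Integrable (fun p => exp (-m * p.1)) ν :=
    integrableOn_comp_fst_compProd_familyKernelOn hmeas measurableSet_Ioi volume hprob
      measurableSet_Ioi (by fun_prop) (exp_neg_integrableOn_Ioi 0 hm)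
  have hlint (q : ℝ) : ∫⁻ p, ‖ladderIntegrand θ q p‖ₑ ∂ν = ∫⁻ t in Ioi (0 : ℝ),
      ∫⁻ x in Ioi (0 : ℝ), ENNReal.ofReal (|exp (-t) - exp (-(q * t + θ * x))| / t) ∂(μ t) :=
    (setLIntegral_congr_fun hS fun p hp => enorm_ladderIntegrand hp.1).trans
      (setLIntegral_compProd_familyKernelOn hmeas measurableSet_Ioi volume measurableSet_Ioi
        (by fun_prop))
  have hiter (f : ℝ × ℝ → ℝ) (hf : Integrable f ν) :
      ∫ p, f p ∂ν = ∫ t in Ioi (0 : ℝ), ∫ x in Ioi (0 : ℝ), f (t, x) ∂(μ t) :=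
    setIntegral_compProd_familyKernelOn hmeas measurableSet_Ioi volume measurableSet_Ioi hf
  have hF (q : ℝ) (hq : 0 < q) : Integrable (ladderIntegrand θ q) ν :=
    integrable_ladderIntegrand hθ hsupp hexp hq₀
      ⟨(measurable_ladderIntegrand θ q₀).aestronglyMeasurable, (hlint q₀).trans_lt hint⟩ hq
  have hGderiv (q : ℝ) (hq : 0 < q) :
      HasDerivAt G (∫ p, exp (-(q * p.1 + θ * p.2)) ∂ν) q := by
    refine (hasDerivAt_integral_ladderIntegrand hθ hsupp hexp hq₀ (hF q₀ hq₀) hq)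
      |>.congr_of_eventuallyEq ?_
    filter_upwards [Ioi_mem_nhds hq] with r hr
    exact (hG r).trans (hiter _ (hF r hr)).symm
  refine ⟨fun q hq => (hlint q).symm.trans_lt (hF q hq).2,
    fun q hq => (hGderiv q hq).differentiableAt, fun q hq => ?_⟩
  rw [(hGderiv q hq).deriv, ← integral_const_mul,
    hiter _ ((integrable_exp_neg_add hθ hsupp hexp hq).const_mul q)]
end
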